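/- arXiv:2001.04327 — 5 statements merged into one kernel-verified Lean document; each statement's English description precedes it below -/
import Mathlib

section
/- Let c > d ≥ 1 be integers, x₀, y₀ nonnegative integers, and suppose x' , y' are nonnegative with x' + y' = x₀ + y₀, and x₁ = x' + c·t, y₁ = y' - d·t ≥ 0 for some t ∈ ℕ. Then x₁ = (x₀ + y₀)·(c/d) holds (as rationals) if and only if x' = 0 and y₁ = 0. -/
theorem weak_multiplication_exactness (c d x₀ y₀ x' y' x₁ y₁ t : ℕ)
    (hd : 1 ≤ d) (hcd : d < c)
    (hsum : x' + y' = x₀ + y₀)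
    (ht : d * t ≤ y')
    (hx₁ : x₁ = x' + c * t)
    (hy₁ : y₁ = y' - d * t) :
    (x₁ : ℚ) = ((x₀ : ℚ) + y₀) * (c / d) ↔ x' = 0 ∧ y₁ = 0 := by
  have hd0 : (d : ℚ) ≠ 0 := by positivity
  have hc0 : 0 < c := lt_trans (Nat.lt_of_lt_of_le Nat.zero_lt_one hd) hcd
  have hy' : y' = y₁ + d * t := by omega
  have hxy : x₀ + y₀ = x' + y₁ + d * t := by omega
  constructor
  · intro h
    have h2 : (x₁ : ℚ) * d = ((x₀ : ℚ) + y₀) * c := by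
      rw [h]; field_simp
    have h3 : x₁ * d = (x₀ + y₀) * c := by exact_mod_cast h2
    rw [hx₁, hxy] at h3
    have h4 : d * x' = c * x' + c * y₁ := by nlinarith [h3]
    have h5 : d * x' ≤ c * x' := Nat.mul_le_mul_right x' hcd.le
    have h6 : c * y₁ = 0 := by linarith [Nat.zero_le (c * y₁)]
    have hy0 : y₁ = 0 := by
      rcases Nat.mul_eq_zero.mp h6 with h | h
      · omega
      · exact h
    refine ⟨?_, hy0⟩
    have h7 : d * x' = c * x' := by omega
    by_contra hx
    have hxpos : 0 < x' := Nat.pos_of_ne_zero hx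
    have : d * x' < c * x' := (Nat.mul_lt_mul_right hxpos).mpr hcd
    omega
  · rintro ⟨hx0, hy0⟩
    have hyt : y' = d * t := by omega
    have hxy' : (x₀ : ℚ) + y₀ = d * t := by
      have : x₀ + y₀ = d * t := by omega
      exact_mod_cast this
    rw [hxy', hx₁, hx0]
    push_cast
    field_simp
    ring
end

section
/- For each k ≥ 1 there exist rationals 1 < f₁ < f₂ < … < f_k = 1 + 1/4^k, each with numerator and denominator (in lowest terms) at most 4^{k²+k}, such that the product f := f_k^{2^k}·…·f₂^{4}·f₁^{2} has numerator and denominator (in lowest terms) at most 4^{2(k²+k)}. -/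
/-!
Put `r j = 1 + 2 ^ (k - j) / 4 ^ k` (`factor k j`), `T i = r i ⋯ r k` (`tailProd`) and
`f i = r i / T (i + 1)` (`tailQuot`).
Then `f i = T i / T (i + 1) ^ 2`, so `∏ f i ^ 2 ^ i` telescopes to `T 1 ^ 2`. Monotonicity
`f i < f (i + 1)` amounts to `r i < r (i + 1) ^ 2`, i.e. `1 + 2u < (1 + u) ^ 2`, and `f i > 1`
because the tail `T (i + 1) = ∏ m < k - i, (1 + 2 ^ m / 4 ^ k)` stays below
`1 + 2 ^ (k - i) / 4 ^ k`.
Every numerator and denominator is a product of at most `k` integers of size at most `2 * 4 ^ k`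
(twice that for the product), and `(2 * 4 ^ k) ^ k ≤ 4 ^ (k ^ 2 + k)`.
-/

open Finset

theorem Finset.prod_Ico_div_succ_of_ne_zero {G : Type*} [CommGroupWithZero G] (g : ℕ → G)
    (hg : ∀ i, g i ≠ 0) {m n : ℕ} (hmn : m ≤ n) :
    ∏ i ∈ Ico m n, g i / g (i + 1) = g m / g n := by
  induction n, hmn using Nat.le_induction with
  | base => rw [Ico_self, prod_empty, div_self (hg m)]
  | succ n hmn ih => rw [prod_Ico_succ_top hmn, ih, div_mul_div_cancel₀ (hg n)]

section Tail

variable {G : Type*} (r : ℕ → G) (k : ℕ) {i : ℕ}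

def tailProd [CommMonoid G] (i : ℕ) : G := ∏ j ∈ Icc i k, r j

def tailQuot [CommGroupWithZero G] (i : ℕ) : G := r i / tailProd r k (i + 1)

theorem tailProd_of_lt [CommMonoid G] (h : k < i) : tailProd r k i = 1 := by
  rw [tailProd, Icc_eq_empty_of_lt h, prod_empty]

theorem tailProd_eq_mul [CommMonoid G] (h : i ≤ k) :
    tailProd r k i = r i * tailProd r k (i + 1) := by
  rw [tailProd, tailProd, Icc_eq_cons_Ioc h, prod_cons, Icc_add_one_left_eq_Ioc]

variable {r}

theorem tailProd_ne_zero [CommGroupWithZero G] (hr : ∀ j, r j ≠ 0) (i : ℕ) :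
    tailProd r k i ≠ 0 :=
  prod_ne_zero_iff.2 fun j _ => hr j

theorem tailProd_pos [CommSemiring G] [PartialOrder G] [IsStrictOrderedRing G]
    (hr : ∀ j, 0 < r j) (i : ℕ) : 0 < tailProd r k i :=
  prod_pos fun j _ => hr j

theorem tailQuot_eq_div_sq [CommGroupWithZero G] (hr : ∀ j, r j ≠ 0) (h : i ≤ k) :
    tailQuot r k i = tailProd r k i / tailProd r k (i + 1) ^ 2 := by
  rw [tailQuot, tailProd_eq_mul r k h, sq, mul_div_mul_right _ _ (tailProd_ne_zero k hr _)]

theorem prod_tailQuot_pow_two_pow [CommGroupWithZero G] (hr : ∀ j, r j ≠ 0) :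
    ∏ i ∈ Icc 1 k, tailQuot r k i ^ 2 ^ i = tailProd r k 1 ^ 2 := by
  set g : ℕ → G := fun i => tailProd r k i ^ 2 ^ i
  have hterm : ∀ i ∈ Icc 1 k, tailQuot r k i ^ 2 ^ i = g i / g (i + 1) := by
    intro i hi
    rw [tailQuot_eq_div_sq k hr (mem_Icc.1 hi).2, div_pow, ← pow_mul, ← pow_succ']
  rw [prod_congr rfl hterm, ← Ico_add_one_right_eq_Icc,
    prod_Ico_div_succ_of_ne_zero g (fun i => pow_ne_zero _ (tailProd_ne_zero k hr i)) (by omega)]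
  simp only [g, pow_one]
  rw [tailProd_of_lt r k k.lt_add_one, one_pow, div_one]

theorem tailQuot_lt_tailQuot_succ [Field G] [LinearOrder G] [IsStrictOrderedRing G]
    (hr : ∀ j, 0 < r j) (h : i + 1 ≤ k) (hsq : r i < r (i + 1) ^ 2) :
    tailQuot r k i < tailQuot r k (i + 1) := by
  rw [tailQuot, tailQuot, tailProd_eq_mul r k h, ← div_div]
  exact div_lt_div_of_pos_right ((div_lt_iff₀ (hr _)).2 (by rwa [← sq])) (tailProd_pos k hr _)

end Tail

theorem two_pow_sq_eq_four_pow {M : Type*} [Semiring M] (d : ℕ) : ((2 : M) ^ d) ^ 2 = 4 ^ d := by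
  rw [← pow_mul, mul_comm, pow_mul]; norm_num

section Bound

variable {K : Type*} [Field K] [LinearOrder K] [IsStrictOrderedRing K] {ε : K}

theorem prod_range_one_add_two_pow_mul_le (hε : 0 ≤ ε) :
    ∀ d : ℕ, 4 ^ d * ε ≤ 1 →
      ∏ m ∈ range d, (1 + 2 ^ m * ε) ≤ 1 + (2 ^ d - 1) * ε + ((2 ^ d - 1) * ε) ^ 2
  | 0, _ => by simp
  | d + 1, hd => by
    have hd' : 4 ^ d * ε ≤ 1 :=
      le_trans (by rw [pow_succ]; nlinarith [mul_nonneg (by positivity : (0 : K) ≤ 4 ^ d) hε]) hd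
    have ih := prod_range_one_add_two_pow_mul_le hε d hd'
    set t : K := 2 ^ d
    have ht : 1 ≤ t := one_le_pow₀ one_le_two
    have htε : t ^ 2 * ε ≤ 1 := by rwa [two_pow_sq_eq_four_pow]
    rw [prod_range_succ, pow_succ]
    calc (∏ m ∈ range d, (1 + 2 ^ m * ε)) * (1 + t * ε)
        ≤ (1 + (t - 1) * ε + ((t - 1) * ε) ^ 2) * (1 + t * ε) := by
          gcongr
      _ ≤ 1 + (t * 2 - 1) * ε + ((t * 2 - 1) * ε) ^ 2 := by
          nlinarith [mul_nonneg (mul_nonneg (sq_nonneg ε) (by linarith : 0 ≤ t))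
            (by nlinarith : 0 ≤ (2 * t - 1) - (t - 1) ^ 2 * ε)]

theorem prod_range_one_add_two_pow_mul_lt (hε : 0 < ε) {d : ℕ} (hd : 4 ^ d * ε ≤ 1) :
    ∏ m ∈ range d, (1 + 2 ^ m * ε) < 1 + 2 ^ d * ε := by
  refine (prod_range_one_add_two_pow_mul_le hε.le d hd).trans_lt ?_
  have ht : (1 : K) ≤ 2 ^ d := one_le_pow₀ one_le_two
  have htε : (2 ^ d) ^ 2 * ε ≤ 1 := by rwa [two_pow_sq_eq_four_pow]
  nlinarith [mul_pos hε hε]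

end Bound

theorem Rat.num_le_and_den_le_of_eq_div {q : ℚ} {a b : ℕ} (hb : 0 < b) (hq : q = a / b) :
    q.num ≤ a ∧ q.den ≤ b := by
  have hq' : q = Rat.divInt a b := by rw [hq, Rat.divInt_eq_div]; push_cast; rfl
  refine ⟨?_, Nat.le_of_dvd hb (by exact_mod_cast hq' ▸ Rat.den_dvd a b)⟩
  rcases Nat.eq_zero_or_pos a with rfl | ha
  · simp [hq]
  · exact Int.le_of_dvd (by exact_mod_cast ha) (hq' ▸ Rat.num_dvd a (by exact_mod_cast hb.ne'))

section DivConst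

variable {K : Type*} [Field K] (a : ℕ → K) {N : K} (k : ℕ) {i : ℕ}

theorem tailProd_div_const :
    tailProd (fun j => a j / N) k i = (∏ j ∈ Icc i k, a j) / N ^ (k + 1 - i) := by
  rw [tailProd, prod_div_distrib, prod_const, Nat.card_Icc]

theorem tailQuot_div_const (hN : N ≠ 0) (hi : i ≤ k) :
    tailQuot (fun j => a j / N) k i = a i * N ^ (k - i) / (N * ∏ j ∈ Icc (i + 1) k, a j) := by
  rw [tailQuot, tailProd_div_const, show k + 1 - (i + 1) = k - i by omega]
  field_simp

end DivConst

def factor (k j : ℕ) : ℚ := (4 ^ k + 2 ^ (k - j)) / 4 ^ k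

section Factor

variable {k i : ℕ}

theorem factor_eq_one_add (k j : ℕ) : factor k j = 1 + 2 ^ (k - j) * (4 ^ k)⁻¹ := by
  rw [factor, add_div, div_self (by positivity), div_eq_mul_inv]

theorem factor_pos (k j : ℕ) : 0 < factor k j := by
  unfold factor; positivity

theorem factor_lt_factor_succ_sq (h : i + 1 ≤ k) : factor k i < factor k (i + 1) ^ 2 := by
  have hu : (0 : ℚ) < 2 ^ (k - (i + 1)) * (4 ^ k)⁻¹ := by positivity
  rw [factor_eq_one_add, factor_eq_one_add, show k - i = k - (i + 1) + 1 by omega, pow_succ]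
  nlinarith

theorem tailProd_factor_lt_factor (k i : ℕ) : tailProd (factor k) k (i + 1) < factor k i := by
  have hreflect :
      tailProd (factor k) k (i + 1) = ∏ m ∈ range (k - i), (1 + 2 ^ m * (4 ^ k)⁻¹) := by
    rw [tailProd, ← Ico_add_one_right_eq_Icc, range_eq_Ico]
    simp only [factor_eq_one_add]
    rw [prod_Ico_reflect (fun m => 1 + 2 ^ m * ((4 : ℚ) ^ k)⁻¹) (i + 1) le_rfl, Nat.sub_self,
      Nat.add_sub_add_right]
  rw [hreflect, factor_eq_one_add]
  refine prod_range_one_add_two_pow_mul_lt (by positivity) ?_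
  rw [← div_eq_mul_inv, div_le_one (by positivity)]
  exact pow_le_pow_right₀ (by norm_num) (Nat.sub_le k i)

theorem tailQuot_factor_self (k : ℕ) : tailQuot (factor k) k k = 1 + 1 / 4 ^ k := by
  rw [tailQuot, tailProd_of_lt _ _ k.lt_add_one, div_one, factor_eq_one_add, Nat.sub_self,
    pow_zero, one_mul, one_div]

theorem strictMonoOn_tailQuot_factor (k : ℕ) :
    StrictMonoOn (tailQuot (factor k) k) (Set.Icc 1 k) :=
  strictMonoOn_of_lt_succ Set.ordConnected_Icc fun i _ _ hi =>
    tailQuot_lt_tailQuot_succ k (factor_pos k) (by simpa using hi.2)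
      (factor_lt_factor_succ_sq (by simpa using hi.2))

theorem factor_eq_natCast_div (k : ℕ) :
    factor k = fun j => ((4 ^ k + 2 ^ (k - j) : ℕ) : ℚ) / ((4 ^ k : ℕ) : ℚ) := by
  funext j; push_cast; rfl

theorem four_pow_add_two_pow_le (k j : ℕ) : 4 ^ k + 2 ^ (k - j) ≤ 2 * 4 ^ k := by
  have : 2 ^ (k - j) ≤ 4 ^ k :=
    (Nat.pow_le_pow_right two_pos (Nat.sub_le k j)).trans (Nat.pow_le_pow_left (by norm_num) k)
  omega

theorem two_mul_four_pow_pow_le (k : ℕ) : (2 * 4 ^ k) ^ k ≤ 4 ^ (k ^ 2 + k) := by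
  rw [mul_pow, ← pow_mul, sq, pow_add, mul_comm]
  exact Nat.mul_le_mul_left _ (Nat.pow_le_pow_left (by norm_num) k)

theorem tailQuot_factor_num_den_le (h1 : 1 ≤ i) (h2 : i ≤ k) :
    (tailQuot (factor k) k i).num ≤ (4 : ℤ) ^ (k ^ 2 + k) ∧
      (tailQuot (factor k) k i).den ≤ 4 ^ (k ^ 2 + k) := by
  set M := 2 * 4 ^ k
  have hM : M * M ^ (k - i) ≤ 4 ^ (k ^ 2 + k) :=
    le_trans (by rw [← pow_succ']; exact Nat.pow_le_pow_right (by positivity) (by omega))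
      (two_mul_four_pow_pow_le k)
  have hnum : (4 ^ k + 2 ^ (k - i)) * (4 ^ k) ^ (k - i) ≤ M * M ^ (k - i) :=
    Nat.mul_le_mul (four_pow_add_two_pow_le k i) (Nat.pow_le_pow_left (by omega) _)
  have hden : 4 ^ k * ∏ j ∈ Icc (i + 1) k, (4 ^ k + 2 ^ (k - j)) ≤ M * M ^ (k - i) := by
    refine Nat.mul_le_mul (by omega) ((prod_le_pow_card _ _ M fun j _ => ?_).trans_eq ?_)
    · exact four_pow_add_two_pow_le k j
    · rw [Nat.card_Icc, show k + 1 - (i + 1) = k - i by omega]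
  have hq : tailQuot (factor k) k i = ((((4 ^ k + 2 ^ (k - i)) * (4 ^ k) ^ (k - i) : ℕ) : ℚ) /
      ((4 ^ k * ∏ j ∈ Icc (i + 1) k, (4 ^ k + 2 ^ (k - j)) : ℕ) : ℚ)) := by
    rw [factor_eq_natCast_div, tailQuot_div_const _ _ (by positivity) h2]; push_cast; rfl
  obtain ⟨hn, hd⟩ := Rat.num_le_and_den_le_of_eq_div (by positivity) hq
  exact ⟨hn.trans (by exact_mod_cast hnum.trans hM), hd.trans (hden.trans hM)⟩

theorem prod_tailQuot_factor_num_den_le (k : ℕ) :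
    (∏ i ∈ Icc 1 k, tailQuot (factor k) k i ^ 2 ^ i).num ≤ (4 : ℤ) ^ (2 * (k ^ 2 + k)) ∧
      (∏ i ∈ Icc 1 k, tailQuot (factor k) k i ^ 2 ^ i).den ≤ 4 ^ (2 * (k ^ 2 + k)) := by
  have hprod : ∏ j ∈ Icc 1 k, (4 ^ k + 2 ^ (k - j)) ≤ 4 ^ (k ^ 2 + k) :=
    ((prod_le_pow_card _ _ _ fun j _ => four_pow_add_two_pow_le k j).trans_eq
      (by rw [Nat.card_Icc, Nat.add_sub_cancel])).trans (two_mul_four_pow_pow_le k)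
  have hden : (4 ^ k) ^ k ≤ 4 ^ (k ^ 2 + k) := by
    rw [← pow_mul, ← sq]; exact Nat.pow_le_pow_right (by norm_num) (by omega)
  have hq : ∏ i ∈ Icc 1 k, tailQuot (factor k) k i ^ 2 ^ i =
      (((∏ j ∈ Icc 1 k, (4 ^ k + 2 ^ (k - j))) ^ 2 : ℕ) : ℚ) /
        ((((4 ^ k) ^ k) ^ 2 : ℕ) : ℚ) := by
    rw [prod_tailQuot_pow_two_pow k (fun j => (factor_pos k j).ne'), factor_eq_natCast_div,
      tailProd_div_const, Nat.add_sub_cancel, div_pow]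
    push_cast; rfl
  obtain ⟨hn, hd⟩ := Rat.num_le_and_den_le_of_eq_div (by positivity) hq
  rw [pow_mul', pow_mul']
  exact ⟨hn.trans (by exact_mod_cast Nat.pow_le_pow_left hprod 2),
    hd.trans (Nat.pow_le_pow_left hden 2)⟩

end Factor

theorem exists_fractions_with_small_description_general (k : ℕ) :
    ∃ f : ℕ → ℚ,
      (∀ i, 1 ≤ i → i ≤ k → 1 < f i) ∧
      (∀ i j, 1 ≤ i → i < j → j ≤ k → f i < f j) ∧
      f k = 1 + 1 / 4 ^ k ∧
      (∀ i, 1 ≤ i → i ≤ k →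
        (f i).num ≤ (4 : ℤ) ^ (k ^ 2 + k) ∧ (f i).den ≤ 4 ^ (k ^ 2 + k)) ∧
      (∏ i ∈ Finset.Icc 1 k, (f i) ^ (2 ^ i)).num ≤ (4 : ℤ) ^ (2 * (k ^ 2 + k)) ∧
      (∏ i ∈ Finset.Icc 1 k, (f i) ^ (2 ^ i)).den ≤ 4 ^ (2 * (k ^ 2 + k)) :=
  ⟨tailQuot (factor k) k,
    fun i _ _ => (one_lt_div (tailProd_pos k (factor_pos k) _)).2 (tailProd_factor_lt_factor k i),
    fun i j hi hij hj => strictMonoOn_tailQuot_factor k ⟨hi, by omega⟩ ⟨by omega, hj⟩ hij,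
    tailQuot_factor_self k,
    fun i hi hik => tailQuot_factor_num_den_le hi hik,
    prod_tailQuot_factor_num_den_le k⟩

theorem exists_fractions_with_small_description (k : ℕ) (hk : 1 ≤ k) :
    ∃ f : ℕ → ℚ,
      (∀ i, 1 ≤ i → i ≤ k → 1 < f i) ∧
      (∀ i j, 1 ≤ i → i < j → j ≤ k → f i < f j) ∧
      f k = 1 + 1 / 4 ^ k ∧
      (∀ i, 1 ≤ i → i ≤ k →
        (f i).num ≤ (4 : ℤ) ^ (k ^ 2 + k) ∧ (f i).den ≤ 4 ^ (k ^ 2 + k)) ∧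
      (∏ i ∈ Finset.Icc 1 k, (f i) ^ (2 ^ i)).num ≤ (4 : ℤ) ^ (2 * (k ^ 2 + k)) ∧
      (∏ i ∈ Finset.Icc 1 k, (f i) ^ (2 ^ i)).den ≤ 4 ^ (2 * (k ^ 2 + k)) :=
  exists_fractions_with_small_description_general k
end

section
/- Let a₁/b₁ < a₂/b₂ < … < a_k/b_k be positive rationals all greater than 1, and define F(n₁,…,n_k) := ∏ᵢ (aᵢ/bᵢ)^{nᵢ} for natural numbers nᵢ. If for every 1 ≤ i ≤ k the tail-sum constraint Σ_{j=i}^{k} n_j ≤ Σ_{j=i}^{k} 2^j holds, then F(n₁,…,n_k) ≤ F(2,4,…,2^k), with equality if and only if n_j = 2^j for all j. -/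
private lemma tele_aux (G : ℕ → ℚ) (hG : ∀ i, G i ≠ 0) :
    ∀ m, 1 ≤ m → ∏ j ∈ Finset.Icc 1 m,
      (if j = 1 then G 1 else G j / G (j-1)) = G m := by
  intro m
  induction m with
  | zero => omega
  | succ m ih =>
    intro _
    rcases Nat.lt_or_ge m 1 with h1 | h1
    · interval_cases m
      simp
    · rw [Finset.prod_Icc_succ_top (by omega), ih h1]
      rw [if_neg (by omega)]
      have h2 : m + 1 - 1 = m := by omega
      rw [h2]
      rw [mul_div_cancel₀ _ (hG m)]

private lemma ident_aux (G : ℕ → ℚ) (hG : ∀ i, G i ≠ 0) (n : ℕ → ℕ) :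
    ∀ m, ∏ i ∈ Finset.Icc 1 m, G i ^ n i
      = ∏ j ∈ Finset.Icc 1 m,
        (if j = 1 then G 1 else G j / G (j-1)) ^ (∑ i ∈ Finset.Icc j m, n i) := by
  intro m
  induction m with
  | zero => simp
  | succ m ih =>
    rw [Finset.prod_Icc_succ_top (by omega), Finset.prod_Icc_succ_top (by omega), ih]
    have h1 : ∏ j ∈ Finset.Icc 1 m,
        (if j = 1 then G 1 else G j / G (j-1)) ^ (∑ i ∈ Finset.Icc j (m+1), n i)
        = (∏ j ∈ Finset.Icc 1 m,
            (if j = 1 then G 1 else G j / G (j-1)) ^ (∑ i ∈ Finset.Icc j m, n i))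
          * (∏ j ∈ Finset.Icc 1 m, (if j = 1 then G 1 else G j / G (j-1))) ^ (n (m+1)) := by
      rw [← Finset.prod_pow, ← Finset.prod_mul_distrib]
      apply Finset.prod_congr rfl
      intro j hj
      rw [Finset.sum_Icc_succ_top (by simp at hj; omega), pow_add]
    rw [h1]
    have hP : (∏ j ∈ Finset.Icc 1 m, (if j = 1 then G 1 else G j / G (j-1)))
        * (if m + 1 = 1 then G 1 else G (m+1) / G (m+1-1)) = G (m+1) := by
      rcases Nat.lt_or_ge m 1 with h1 | h1
      · interval_cases m
        simp
      · rw [tele_aux G hG m h1, if_neg (by omega)]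
        have h2 : m + 1 - 1 = m := by omega
        rw [h2]
        rw [mul_div_cancel₀ _ (hG m)]
    have hs : (∑ i ∈ Finset.Icc (m+1) (m+1), n i) = n (m+1) := by simp
    rw [hs, mul_assoc, ← mul_pow, hP]

theorem product_maximized_at_powers (k : ℕ) (hk : 1 ≤ k)
    (g : ℕ → ℚ)
    (hg1 : ∀ i, 1 ≤ i → i ≤ k → 1 < g i)
    (hgmono : ∀ i j, 1 ≤ i → i < j → j ≤ k → g i < g j)
    (n : ℕ → ℕ)
    (hn : ∀ i, 1 ≤ i → i ≤ k →
      ∑ j ∈ Finset.Icc i k, n j ≤ ∑ j ∈ Finset.Icc i k, 2 ^ j) :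
    ∏ i ∈ Finset.Icc 1 k, (g i) ^ (n i) ≤ ∏ i ∈ Finset.Icc 1 k, (g i) ^ (2 ^ i) ∧
    (∏ i ∈ Finset.Icc 1 k, (g i) ^ (n i) = ∏ i ∈ Finset.Icc 1 k, (g i) ^ (2 ^ i) ↔
      ∀ j, 1 ≤ j → j ≤ k → n j = 2 ^ j) := by
  set G : ℕ → ℚ := fun i => if 1 ≤ i ∧ i ≤ k then g i else 2 with hGdef
  have hGg : ∀ i ∈ Finset.Icc 1 k, G i = g i := by
    intro i hi
    simp only [Finset.mem_Icc] at hi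
    simp [hGdef, hi.1, hi.2]
  have hGpos : ∀ i, 0 < G i := by
    intro i
    simp only [hGdef]
    split
    · next h => exact lt_trans one_pos (hg1 i h.1 h.2)
    · norm_num
  have hGne : ∀ i, G i ≠ 0 := fun i => ne_of_gt (hGpos i)
  have hprodg : ∀ f : ℕ → ℕ, ∏ i ∈ Finset.Icc 1 k, (g i) ^ (f i)
      = ∏ i ∈ Finset.Icc 1 k, (G i) ^ (f i) := by
    intro f
    apply Finset.prod_congr rfl
    intro i hi
    rw [hGg i hi]
  set h : ℕ → ℚ := fun j => if j = 1 then G 1 else G j / G (j-1) with hhdef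
  have hh1 : ∀ j ∈ Finset.Icc 1 k, 1 < h j := by
    intro j hj
    simp only [Finset.mem_Icc] at hj
    simp only [hhdef]
    split
    · next e =>
      rw [hGg 1 (by simp [hk])]
      exact hg1 1 le_rfl hk
    · next e =>
      have h2 : 2 ≤ j := by omega
      rw [hGg j (by simp [hj.1, hj.2]), hGg (j-1) (by simp; omega)]
      rw [one_lt_div (lt_trans one_pos (hg1 (j-1) (by omega) (by omega)))]
      exact hgmono (j-1) j (by omega) (by omega) hj.2
  set T : ℕ → ℕ := fun j => ∑ i ∈ Finset.Icc j k, n i with hTdef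
  set S : ℕ → ℕ := fun j => ∑ i ∈ Finset.Icc j k, 2 ^ i with hSdef
  have hId1 : ∏ i ∈ Finset.Icc 1 k, (g i) ^ (n i) = ∏ j ∈ Finset.Icc 1 k, (h j) ^ (T j) := by
    rw [hprodg, ident_aux G hGne n k]
  have hId2 : ∏ i ∈ Finset.Icc 1 k, (g i) ^ (2 ^ i)
      = ∏ j ∈ Finset.Icc 1 k, (h j) ^ (S j) := by
    rw [hprodg, ident_aux G hGne (fun i => 2 ^ i) k]
  have hTS : ∀ j ∈ Finset.Icc 1 k, T j ≤ S j := by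
    intro j hj
    simp only [Finset.mem_Icc] at hj
    exact hn j hj.1 hj.2
  constructor
  · rw [hId1, hId2]
    apply Finset.prod_le_prod
    · intro j hj
      exact le_of_lt (pow_pos (lt_trans one_pos (hh1 j hj)) _)
    · intro j hj
      exact pow_le_pow_right₀ (le_of_lt (hh1 j hj)) (hTS j hj)
  · constructor
    · intro heq
      -- first: all tails equal
      have hTSe : ∀ j ∈ Finset.Icc 1 k, T j = S j := by
        by_contra hc
        push_neg at hc
        obtain ⟨j₀, hj₀, hne⟩ := hc
        have hlt : ∏ j ∈ Finset.Icc 1 k, (h j) ^ (T j)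
            < ∏ j ∈ Finset.Icc 1 k, (h j) ^ (S j) := by
          apply Finset.prod_lt_prod
          · intro j hj; exact pow_pos (lt_trans one_pos (hh1 j hj)) _
          · intro j hj
            exact pow_le_pow_right₀ (le_of_lt (hh1 j hj)) (hTS j hj)
          · exact ⟨j₀, hj₀, pow_lt_pow_right₀ (hh1 j₀ hj₀)
              (lt_of_le_of_ne (hTS j₀ hj₀) hne)⟩
        rw [← hId1, ← hId2, heq] at hlt
        exact lt_irrefl _ hlt
      intro j hj1 hjk
      have hstep : ∀ m, 1 ≤ m → m ≤ k →
          T m = n m + T (m+1) ∧ S m = 2 ^ m + S (m+1) := by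
        intro m hm1 hmk
        constructor <;>
        · simp only [hTdef, hSdef]
          rw [Finset.Icc_eq_cons_Ioc hmk, Finset.sum_cons, ← Finset.Icc_add_one_left_eq_Ioc]
      have hT1 := (hstep j hj1 hjk).1
      have hS1 := (hstep j hj1 hjk).2
      have hTj : T j = S j := hTSe j (by simp [hj1, hjk])
      rcases Nat.lt_or_ge j k with hjlt | hjge
      · have hTj1 : T (j+1) = S (j+1) := hTSe (j+1) (by simp; omega)
        omega
      · have hjk' : j = k := by omega
        have hT0 : T (j+1) = 0 := by
          simp only [hTdef]
          rw [Finset.Icc_eq_empty (by omega), Finset.sum_empty]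
        have hS0 : S (j+1) = 0 := by
          simp only [hSdef]
          rw [Finset.Icc_eq_empty (by omega), Finset.sum_empty]
        omega
    · intro hall
      apply Finset.prod_congr rfl
      intro i hi
      simp only [Finset.mem_Icc] at hi
      rw [hall i hi.1 hi.2]
end

section
/- Let a₁/b₁ < … < a_k/b_k be rationals greater than 1. Any vector (n₁,…,n_k) of naturals satisfying Σ_{j=i}^k n_j ≤ Σ_{j=i}^k 2^j for all i can be obtained from (2, 4, …, 2^k) by finitely many applications of two operations: (1) decrement some nᵢ by 1; (2) decrement some nᵢ by 1 and increment n_{i-1} by 1 (i ≥ 2). Moreover each operation strictly decreases the value of ∏ᵢ (aᵢ/bᵢ)^{nᵢ}. -/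
/-- One step: either decrement some `nᵢ` (1 ≤ i ≤ k) by 1, or decrement some `nᵢ`
(2 ≤ i ≤ k) by 1 and increment `n_{i-1}` by 1. -/
def VecStep (k : ℕ) (m m' : ℕ → ℕ) : Prop :=
  (∃ i, 1 ≤ i ∧ i ≤ k ∧ 1 ≤ m i ∧ m' = Function.update m i (m i - 1)) ∨
  (∃ i, 2 ≤ i ∧ i ≤ k ∧ 1 ≤ m i ∧
    m' = Function.update (Function.update m i (m i - 1)) (i - 1) (m (i - 1) + 1))

lemma myIcc_split {i k : ℕ} (h : i ≤ k) :
    Finset.Icc i k = insert i (Finset.Icc (i+1) k) := by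
  ext j; simp [Finset.mem_Icc]; omega

lemma mysum_Icc_bot (f : ℕ → ℕ) {i k : ℕ} (h : i ≤ k) :
    ∑ j ∈ Finset.Icc i k, f j = f i + ∑ j ∈ Finset.Icc (i+1) k, f j := by
  rw [myIcc_split h, Finset.sum_insert (by simp)]

lemma reach (k : ℕ) (hk : 1 ≤ k) (N : ℕ) :
    ∀ (n : ℕ → ℕ),
      (∀ i, 1 ≤ i → i ≤ k →
        ∑ j ∈ Finset.Icc i k, n j ≤ ∑ j ∈ Finset.Icc i k, 2 ^ j) →
      (∀ i, i = 0 ∨ k < i → n i = 2 ^ i) →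
      (∑ i ∈ Finset.Icc 1 k,
        (∑ j ∈ Finset.Icc i k, 2 ^ j - ∑ j ∈ Finset.Icc i k, n j)) ≤ N →
      Relation.ReflTransGen (VecStep k) (fun i => 2 ^ i) n := by
  induction N with
  | zero =>
    intro n hcon hout hμ
    have hall : ∀ i ∈ Finset.Icc 1 k,
        (∑ j ∈ Finset.Icc i k, 2 ^ j - ∑ j ∈ Finset.Icc i k, n j) = 0 :=
      Finset.sum_eq_zero_iff.mp (Nat.le_zero.mp hμ)
    have hTeq : ∀ i, 1 ≤ i → i ≤ k →
        ∑ j ∈ Finset.Icc i k, n j = ∑ j ∈ Finset.Icc i k, 2 ^ j := by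
      intro i h1 h2
      have h3 := hall i (Finset.mem_Icc.mpr ⟨h1, h2⟩)
      have h4 := hcon i h1 h2
      omega
    have hn : n = fun i => 2 ^ i := by
      funext i
      rcases Nat.lt_or_ge k i with h | h
      · exact hout i (Or.inr h)
      · rcases Nat.eq_zero_or_pos i with rfl | h1
        · exact hout 0 (Or.inl rfl)
        · rcases eq_or_lt_of_le h with rfl | hlt
          · have := hTeq i h1 le_rfl
            simpa using this
          · have e1 := hTeq i h1 h
            have e2 := hTeq (i+1) (by omega) hlt
            have e3 : ∑ j ∈ Finset.Icc i k, (2:ℕ) ^ j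
                = 2 ^ i + ∑ j ∈ Finset.Icc (i+1) k, 2 ^ j := by
              simpa using mysum_Icc_bot (fun j => 2 ^ j) h
            rw [mysum_Icc_bot n h, e3, e2] at e1
            omega
    rw [hn]
  | succ N ih =>
    intro n hcon hout hμ
    by_cases hμ0 : (∑ i ∈ Finset.Icc 1 k,
        (∑ j ∈ Finset.Icc i k, 2 ^ j - ∑ j ∈ Finset.Icc i k, n j)) = 0
    · exact ih n hcon hout (by omega)
    · obtain ⟨i, himem, hine⟩ := Finset.exists_ne_zero_of_sum_ne_zero hμ0
      rw [Finset.mem_Icc] at himem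
      have hP : ∃ j, 1 ≤ j ∧ j ≤ k ∧
          ∑ l ∈ Finset.Icc j k, n l < ∑ l ∈ Finset.Icc j k, 2 ^ l :=
        ⟨i, himem.1, himem.2, by omega⟩
      classical
      obtain ⟨i₀, ⟨hi₀1, hi₀k, hi₀lt⟩, hmini⟩ :
          ∃ i₀, (1 ≤ i₀ ∧ i₀ ≤ k ∧
            ∑ l ∈ Finset.Icc i₀ k, n l < ∑ l ∈ Finset.Icc i₀ k, 2 ^ l) ∧
            ∀ j, j < i₀ → ¬(1 ≤ j ∧ j ≤ k ∧
              ∑ l ∈ Finset.Icc j k, n l < ∑ l ∈ Finset.Icc j k, 2 ^ l) :=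
        ⟨Nat.find hP, Nat.find_spec hP, fun j hj => Nat.find_min hP hj⟩
      have hmin : ∀ j, 1 ≤ j → j < i₀ →
          ∑ l ∈ Finset.Icc j k, n l = ∑ l ∈ Finset.Icc j k, 2 ^ l := by
        intro j h1 h2
        have h3 := hmini j h2
        have h4 := hcon j h1 (by omega)
        push_neg at h3
        have := h3 h1 (by omega)
        omega
      rcases eq_or_lt_of_le hi₀1 with hi₀eq | hi₀2
      · -- i₀ = 1 : reverse increment at 1
        subst hi₀eq
        set n'' : ℕ → ℕ := Function.update n 1 (n 1 + 1) with hn''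
        have h1mem : (1:ℕ) ∈ Finset.Icc 1 k := Finset.mem_Icc.mpr ⟨le_rfl, hk⟩
        have hT : ∀ j, ∑ l ∈ Finset.Icc j k, n'' l =
            (∑ l ∈ Finset.Icc j k, n l) + (if 1 ∈ Finset.Icc j k then 1 else 0) := by
          intro j
          have hpt : ∀ l, n'' l = n l + (if l = 1 then 1 else 0) := by
            intro l
            rcases eq_or_ne l 1 with rfl | h
            · simp [hn'']
            · simp [hn'', Function.update_of_ne h, h]
          simp_rw [hpt]
          rw [Finset.sum_add_distrib, Finset.sum_ite_eq' (Finset.Icc j k) 1 (fun _ => 1)]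
        have hstep : VecStep k n'' n := by
          left
          refine ⟨1, le_rfl, hk, by simp [hn''], ?_⟩
          funext j
          rcases eq_or_ne j 1 with rfl | h
          · simp [hn'']
          · simp [Function.update_of_ne h, hn'']
        have hcon'' : ∀ i, 1 ≤ i → i ≤ k →
            ∑ j ∈ Finset.Icc i k, n'' j ≤ ∑ j ∈ Finset.Icc i k, 2 ^ j := by
          intro i h1 h2
          rw [hT i]
          rcases eq_or_ne i 1 with rfl | h
          · rw [if_pos h1mem]; omega
          · rw [if_neg (by rw [Finset.mem_Icc]; omega)]
            have := hcon i h1 h2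
            omega
        have hout'' : ∀ i, i = 0 ∨ k < i → n'' i = 2 ^ i := by
          intro i hi
          rw [hn'', Function.update_of_ne (by omega)]
          exact hout i hi
        have hμ'' : (∑ i ∈ Finset.Icc 1 k,
            (∑ j ∈ Finset.Icc i k, 2 ^ j - ∑ j ∈ Finset.Icc i k, n'' j)) ≤ N := by
          rw [← Finset.add_sum_erase _ _ h1mem] at hμ ⊢
          have heq : ∀ j ∈ (Finset.Icc 1 k).erase 1,
              (∑ l ∈ Finset.Icc j k, 2 ^ l - ∑ l ∈ Finset.Icc j k, n'' l) =
              (∑ l ∈ Finset.Icc j k, 2 ^ l - ∑ l ∈ Finset.Icc j k, n l) := by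
            intro j hj
            obtain ⟨hj1, hj2⟩ := Finset.mem_erase.mp hj
            rw [Finset.mem_Icc] at hj2
            rw [hT j, if_neg (by rw [Finset.mem_Icc]; omega)]
            omega
          rw [Finset.sum_congr rfl heq, hT 1, if_pos h1mem]
          omega
        exact (ih n'' hcon'' hout'' hμ'').tail hstep
      · -- i₀ ≥ 2 : reverse move
        have hprev := hmin (i₀ - 1) (by omega) (by omega)
        have hsplit := mysum_Icc_bot n (show i₀ - 1 ≤ k by omega)
        have hsplit2 : ∑ j ∈ Finset.Icc (i₀ - 1) k, (2:ℕ) ^ j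
            = 2 ^ (i₀ - 1) + ∑ j ∈ Finset.Icc i₀ k, 2 ^ j := by
          have := mysum_Icc_bot (fun j => 2 ^ j) (show i₀ - 1 ≤ k by omega)
          rw [show i₀ - 1 + 1 = i₀ by omega] at this
          simpa using this
        rw [show i₀ - 1 + 1 = i₀ by omega] at hsplit
        have hpow : 1 ≤ 2 ^ (i₀ - 1) := Nat.one_le_two_pow
        have hnp : 2 ≤ n (i₀ - 1) := by
          rw [hsplit, hsplit2] at hprev
          omega
        set n'' : ℕ → ℕ := fun j =>
          if j = i₀ then n i₀ + 1 else if j = i₀ - 1 then n (i₀ - 1) - 1 else n j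
          with hn''
        have hv₀ : n'' i₀ = n i₀ + 1 := by rw [hn'']; simp
        have hvp : n'' (i₀ - 1) = n (i₀ - 1) - 1 := by
          rw [hn'']
          simp [show i₀ - 1 ≠ i₀ by omega]
        have hvo : ∀ j, j ≠ i₀ → j ≠ i₀ - 1 → n'' j = n j := by
          intro j h1 h2
          rw [hn'']
          simp [h1, h2]
        have hTT : ∀ j, (∑ l ∈ Finset.Icc j k, n'' l) +
            (if i₀ - 1 ∈ Finset.Icc j k then 1 else 0) =
            (∑ l ∈ Finset.Icc j k, n l) + (if i₀ ∈ Finset.Icc j k then 1 else 0) := by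
          intro j
          have hpt : ∀ l, n'' l + (if l = i₀ - 1 then 1 else 0) =
              n l + (if l = i₀ then 1 else 0) := by
            intro l
            by_cases h1 : l = i₀
            · subst h1
              rw [hv₀, if_pos rfl, if_neg (show l ≠ l - 1 by omega)]
            · by_cases h2 : l = i₀ - 1
              · subst h2
                rw [hvp, if_pos rfl, if_neg h1]
                omega
              · rw [hvo l h1 h2, if_neg h2, if_neg h1]
          calc (∑ l ∈ Finset.Icc j k, n'' l) + (if i₀ - 1 ∈ Finset.Icc j k then 1 else 0)
              = ∑ l ∈ Finset.Icc j k, (n'' l + if l = i₀ - 1 then 1 else 0) := by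
                rw [Finset.sum_add_distrib,
                  Finset.sum_ite_eq' (Finset.Icc j k) (i₀ - 1) (fun _ => 1)]
            _ = ∑ l ∈ Finset.Icc j k, (n l + if l = i₀ then 1 else 0) :=
                Finset.sum_congr rfl fun l _ => hpt l
            _ = (∑ l ∈ Finset.Icc j k, n l) + (if i₀ ∈ Finset.Icc j k then 1 else 0) := by
                rw [Finset.sum_add_distrib,
                  Finset.sum_ite_eq' (Finset.Icc j k) i₀ (fun _ => 1)]
        have hTeq : ∀ j, j ≠ i₀ →
            ∑ l ∈ Finset.Icc j k, n'' l = ∑ l ∈ Finset.Icc j k, n l := by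
          intro j hj
          have := hTT j
          rcases Nat.lt_or_ge (i₀ - 1) j with h | h
          · rw [if_neg (by rw [Finset.mem_Icc]; omega),
              if_neg (by rw [Finset.mem_Icc]; omega)] at this
            omega
          · rw [if_pos (by rw [Finset.mem_Icc]; omega),
              if_pos (by rw [Finset.mem_Icc]; omega)] at this
            omega
        have hTi₀ : ∑ l ∈ Finset.Icc i₀ k, n'' l = (∑ l ∈ Finset.Icc i₀ k, n l) + 1 := by
          have := hTT i₀
          rw [if_neg (by rw [Finset.mem_Icc]; omega),
            if_pos (by rw [Finset.mem_Icc]; omega)] at this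
          omega
        have hstep : VecStep k n'' n := by
          right
          refine ⟨i₀, hi₀2, hi₀k, by rw [hv₀]; omega, ?_⟩
          funext j
          by_cases h1 : j = i₀ - 1
          · subst h1
            rw [Function.update_self, hvp]
            omega
          · rw [Function.update_of_ne h1]
            by_cases h2 : j = i₀
            · subst h2
              rw [Function.update_self, hv₀]
              omega
            · rw [Function.update_of_ne h2]
              exact (hvo j h2 h1).symm
        have hcon'' : ∀ i, 1 ≤ i → i ≤ k →
            ∑ j ∈ Finset.Icc i k, n'' j ≤ ∑ j ∈ Finset.Icc i k, 2 ^ j := by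
          intro i h1 h2
          rcases eq_or_ne i i₀ with rfl | h
          · rw [hTi₀]; omega
          · rw [hTeq i h]; exact hcon i h1 h2
        have hout'' : ∀ i, i = 0 ∨ k < i → n'' i = 2 ^ i := by
          intro i hi
          rw [hvo i (by omega) (by omega)]
          exact hout i hi
        have hμ'' : (∑ i ∈ Finset.Icc 1 k,
            (∑ j ∈ Finset.Icc i k, 2 ^ j - ∑ j ∈ Finset.Icc i k, n'' j)) ≤ N := by
          have h0mem : i₀ ∈ Finset.Icc 1 k := Finset.mem_Icc.mpr ⟨hi₀1, hi₀k⟩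
          rw [← Finset.add_sum_erase _ _ h0mem] at hμ ⊢
          have heq : ∀ j ∈ (Finset.Icc 1 k).erase i₀,
              (∑ l ∈ Finset.Icc j k, 2 ^ l - ∑ l ∈ Finset.Icc j k, n'' l) =
              (∑ l ∈ Finset.Icc j k, 2 ^ l - ∑ l ∈ Finset.Icc j k, n l) := by
            intro j hj
            rw [hTeq j (Finset.mem_erase.mp hj).1]
          rw [Finset.sum_congr rfl heq, hTi₀]
          omega
        exact (ih n'' hcon'' hout'' hμ'').tail hstep

lemma step_decreases (k : ℕ) (g : ℕ → ℚ)
    (hg1 : ∀ i, 1 ≤ i → i ≤ k → 1 < g i)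
    (hgmono : ∀ i j, 1 ≤ i → i < j → j ≤ k → g i < g j)
    (m m' : ℕ → ℕ) (h : VecStep k m m') :
    ∏ i ∈ Finset.Icc 1 k, (g i) ^ (m' i) < ∏ i ∈ Finset.Icc 1 k, (g i) ^ (m i) := by
  have hgpos : ∀ j ∈ Finset.Icc 1 k, (0:ℚ) < g j := fun j hj => by
    rw [Finset.mem_Icc] at hj; exact lt_trans one_pos (hg1 j hj.1 hj.2)
  rcases h with ⟨i, hi1, hik, hmi, hm'⟩ | ⟨i, hi2, hik, hmi, hm'⟩
  · have himem : i ∈ Finset.Icc 1 k := Finset.mem_Icc.mpr ⟨hi1, hik⟩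
    have hfun : (fun j => g j ^ (m' j)) = Function.update (fun j => g j ^ (m j)) i (g i ^ (m i - 1)) := by
      funext j
      rcases eq_or_ne j i with rfl | hne
      · simp [hm']
      · simp [hm', Function.update_of_ne hne]
    calc ∏ j ∈ Finset.Icc 1 k, (g j) ^ (m' j)
        = ∏ j ∈ Finset.Icc 1 k, Function.update (fun j => g j ^ (m j)) i (g i ^ (m i - 1)) j := by
          rw [← hfun]
      _ = g i ^ (m i - 1) * ∏ j ∈ (Finset.Icc 1 k).erase i, g j ^ (m j) := by
          rw [Finset.prod_update_of_mem himem, Finset.erase_eq]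
      _ < g i ^ (m i) * ∏ j ∈ (Finset.Icc 1 k).erase i, g j ^ (m j) := by
          apply mul_lt_mul_of_pos_right
          · exact pow_lt_pow_right₀ (hg1 i hi1 hik) (by omega)
          · exact Finset.prod_pos fun j hj => pow_pos (hgpos j (Finset.mem_of_mem_erase hj)) _
      _ = ∏ j ∈ Finset.Icc 1 k, g j ^ (m j) := Finset.mul_prod_erase _ (fun j => g j ^ (m j)) himem
  · have hi1 : 1 ≤ i := by omega
    have hne : i - 1 ≠ i := by omega
    have hp1 : i - 1 + 1 = i := by omega
    have himem : i ∈ Finset.Icc 1 k := Finset.mem_Icc.mpr ⟨hi1, hik⟩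
    have hpmem : i - 1 ∈ Finset.Icc 1 k := Finset.mem_Icc.mpr ⟨by omega, by omega⟩
    have hpmem' : i - 1 ∈ (Finset.Icc 1 k).erase i := Finset.mem_erase.mpr ⟨hne, hpmem⟩
    set s := ((Finset.Icc 1 k).erase i).erase (i-1) with hs
    have hrest : (0:ℚ) < ∏ j ∈ s, g j ^ (m j) :=
      Finset.prod_pos fun j hj => pow_pos (hgpos j (Finset.mem_of_mem_erase (Finset.mem_of_mem_erase hj))) _
    have hm'i : m' i = m i - 1 := by simp [hm', Function.update_of_ne hne.symm]
    have hm'p : m' (i-1) = m (i-1) + 1 := by simp [hm']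
    have hm'o : ∀ j, j ≠ i → j ≠ i - 1 → m' j = m j := fun j h1 h2 => by
      simp [hm', Function.update_of_ne h1, Function.update_of_ne h2]
    have key : ∀ (f : ℕ → ℕ), ∏ j ∈ Finset.Icc 1 k, g j ^ (f j)
        = g i ^ (f i) * (g (i-1) ^ (f (i-1)) * ∏ j ∈ s, g j ^ (f j)) := by
      intro f
      rw [← Finset.mul_prod_erase _ _ himem, ← Finset.mul_prod_erase _ _ hpmem']
    have hsprod : ∏ j ∈ s, g j ^ (m' j) = ∏ j ∈ s, g j ^ (m j) :=
      Finset.prod_congr rfl fun j hj => by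
        rw [hm'o j (Finset.mem_erase.mp (Finset.mem_of_mem_erase hj)).1
          (Finset.mem_erase.mp hj).1]
    rw [key m', key m, hm'i, hm'p, hsprod]
    have h1 : (0:ℚ) < g (i-1) ^ (m (i-1)) := pow_pos (hgpos _ hpmem) _
    have hgi1 : (1:ℚ) < g i := hg1 i hi1 hik
    have hgilt : g (i-1) < g i := hgmono (i-1) i (by omega) (by omega) hik
    have hpow : g i ^ (m i - 1) * g (i-1) < g i ^ (m i) := by
      have : g i ^ (m i) = g i ^ (m i - 1) * g i := by
        rw [← pow_succ]; congr 1; omega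
      rw [this]
      exact mul_lt_mul_of_pos_left hgilt (pow_pos (by linarith) _)
    calc g i ^ (m i - 1) * (g (i-1) ^ (m (i-1) + 1) * ∏ j ∈ s, g j ^ (m j))
        = (g i ^ (m i - 1) * g (i-1)) * (g (i-1) ^ (m (i-1)) * ∏ j ∈ s, g j ^ (m j)) := by
          rw [pow_succ]; ring
      _ < g i ^ (m i) * (g (i-1) ^ (m (i-1)) * ∏ j ∈ s, g j ^ (m j)) := by
          apply mul_lt_mul_of_pos_right hpow (by positivity)

theorem vectors_reachable_and_step_decreases (k : ℕ) (hk : 1 ≤ k)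
    (g : ℕ → ℚ)
    (hg1 : ∀ i, 1 ≤ i → i ≤ k → 1 < g i)
    (hgmono : ∀ i j, 1 ≤ i → i < j → j ≤ k → g i < g j) :
    (∀ n : ℕ → ℕ,
      (∀ i, 1 ≤ i → i ≤ k →
        ∑ j ∈ Finset.Icc i k, n j ≤ ∑ j ∈ Finset.Icc i k, 2 ^ j) →
      (∀ i, i = 0 ∨ k < i → n i = 2 ^ i) →
      Relation.ReflTransGen (VecStep k) (fun i => 2 ^ i) n) ∧
    (∀ m m' : ℕ → ℕ, VecStep k m m' →
      ∏ i ∈ Finset.Icc 1 k, (g i) ^ (m' i) < ∏ i ∈ Finset.Icc 1 k, (g i) ^ (m i)) := by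
  constructor
  · intro n hcon hout
    exact reach k hk _ n hcon hout le_rfl
  · exact step_decreases k g hg1 hgmono
end

section
/- Let c/d > 1 be an irreducible fraction and x₀, y₀, z₀ nonnegative integers. Any run of the Hopcroft–Pansiot gadget (which repeats, z₀ - z₁ times: transfer some amount from x to y one by one, then repeatedly add c to x while subtracting d from y) satisfies x₁ + y₁ ≤ (x₀ + y₀)·(c/d)^{z₀ - z₁}, where x₁, y₁, z₁ are the final values. -/
theorem hopcroft_pansiot_bound (c d x₀ y₀ z₀ z₁ : ℕ)
    (hd : 1 ≤ d) (hcd : d < c) (hcop : Nat.Coprime c d) (hz : z₁ ≤ z₀)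
    (x y : ℕ → ℕ) (hx0 : x 0 = x₀) (hy0 : y 0 = y₀)
    (hstep : ∀ j < z₀ - z₁, ∃ s t : ℕ,
      s ≤ x j ∧ d * t ≤ y j + s ∧
      x (j + 1) = x j - s + c * t ∧ y (j + 1) = y j + s - d * t) :
    ((x (z₀ - z₁) : ℚ) + y (z₀ - z₁)) ≤
      ((x₀ : ℚ) + y₀) * ((c : ℚ) / d) ^ (z₀ - z₁) := by
  have hd' : (0 : ℚ) < d := by exact_mod_cast hd
  have hcd' : (d : ℚ) < c := by exact_mod_cast hcd
  have key : ∀ m, m ≤ z₀ - z₁ →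
      ((x m : ℚ) + y m) ≤ ((x₀ : ℚ) + y₀) * ((c : ℚ) / d) ^ m := by
    intro m
    induction m with
    | zero => intro _; simp [hx0, hy0]
    | succ k ih =>
      intro hm
      have hk : k ≤ z₀ - z₁ := Nat.le_of_succ_le hm
      have ihk := ih hk
      obtain ⟨s, t, hs, ht, hx1, hy1⟩ := hstep k hm
      have hA : (0 : ℚ) ≤ (x k : ℚ) + y k := by positivity
      have hT : (0 : ℚ) ≤ (t : ℚ) := by positivity
      have hdt : (d : ℚ) * t ≤ (x k : ℚ) + y k := by
        have : (d * t : ℕ) ≤ x k + y k := le_trans ht (by omega)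
        exact_mod_cast this
      have hsum : ((x (k + 1) : ℚ) + y (k + 1))
          = ((x k : ℚ) + y k) + ((c : ℚ) - d) * t := by
        rw [hx1, hy1]
        have h1 : ((x k - s + c * t : ℕ) : ℚ) = (x k : ℚ) - s + c * t := by
          push_cast [Nat.cast_sub hs]; ring
        have h2 : ((y k + s - d * t : ℕ) : ℚ) = (y k : ℚ) + s - d * t := by
          push_cast [Nat.cast_sub ht]; ring
        rw [h1, h2]; ring
      have hstep' : ((x k : ℚ) + y k) + ((c : ℚ) - d) * t
          ≤ ((x k : ℚ) + y k) * ((c : ℚ) / d) := by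
        rw [mul_div_assoc', le_div_iff₀ hd']
        nlinarith [hdt, hT, hA, le_of_lt hcd']
      calc ((x (k + 1) : ℚ) + y (k + 1))
          = ((x k : ℚ) + y k) + ((c : ℚ) - d) * t := hsum
        _ ≤ ((x k : ℚ) + y k) * ((c : ℚ) / d) := hstep'
        _ ≤ (((x₀ : ℚ) + y₀) * ((c : ℚ) / d) ^ k) * ((c : ℚ) / d) := by
            apply mul_le_mul_of_nonneg_right ihk (by positivity)
        _ = ((x₀ : ℚ) + y₀) * ((c : ℚ) / d) ^ (k + 1) := by ring
  exact key _ le_rfl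
end
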